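/- If A' ≺ A, i.e., A' ⪯ A and there exist vertices v, w in A' with d_{A'}(v,w) strictly greater than d_A(h(v),h(w)) for the witnessing embedding h, then A' is not isomorphic to A. -/
import Mathlib

open SimpleGraph

lemma hom_dist_le {V W : Type*} (G : SimpleGraph V) (H : SimpleGraph W)
    (hG : G.Connected) (f : G →g H) (v w : V) : H.dist (f v) (f w) ≤ G.dist v w := by
  obtain ⟨p, hp⟩ := hG.exists_walk_length_eq_dist v w
  calc H.dist (f v) (f w) ≤ (p.map f).length := dist_le _
    _ = G.dist v w := by rw [Walk.length_map, hp]

/-- If `A' ≺ A`, i.e. there is a subgraph isomorphism `h` of `A'` into `A` under which all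
pairwise distances are non-increasing and some pair of vertices has strictly smaller
distance, then `A'` is not isomorphic to `A`. -/
theorem not_iso_of_strictly_decreasing_embedding {V W : Type*} [Fintype V] [Fintype W]
    (G : SimpleGraph V) (H : SimpleGraph W) (hG : G.Connected) (hH : H.Connected)
    (h : V → W) (hinj : Function.Injective h)
    (hadj : ∀ v w, G.Adj v w → H.Adj (h v) (h w))
    (hdist : ∀ v w, H.dist (h v) (h w) ≤ G.dist v w)
    (hstrict : ∃ v w, H.dist (h v) (h w) < G.dist v w) :
    IsEmpty (G ≃g H) := by
  constructor
  intro φ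
  have hcard : Fintype.card V = Fintype.card W := Fintype.card_congr φ.toEquiv
  have hbij : Function.Bijective h :=
    (Fintype.bijective_iff_injective_and_card h).2 ⟨hinj, hcard⟩
  let e := Equiv.ofBijective h hbij
  have key1 : ∑ p : V × V, H.dist (h p.1) (h p.2) < ∑ p : V × V, G.dist p.1 p.2 := by
    obtain ⟨v, w, hvw⟩ := hstrict
    exact Finset.sum_lt_sum (fun p _ => hdist p.1 p.2) ⟨(v, w), Finset.mem_univ _, hvw⟩
  have key2 : ∑ p : V × V, H.dist (h p.1) (h p.2) = ∑ p : W × W, H.dist p.1 p.2 := by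
    rw [← Equiv.sum_comp (Equiv.prodCongr e e) (fun p : W × W => H.dist p.1 p.2)]
    rfl
  have hiso : ∀ v w : V, H.dist (φ v) (φ w) = G.dist v w := by
    intro v w
    refine le_antisymm (hom_dist_le G H hG φ.toHom v w) ?_
    have := hom_dist_le H G hH φ.symm.toHom (φ v) (φ w)
    simpa using this
  have key3 : ∑ p : V × V, G.dist p.1 p.2 = ∑ p : W × W, H.dist p.1 p.2 := by
    rw [← Equiv.sum_comp (Equiv.prodCongr φ.toEquiv φ.toEquiv)
      (fun p : W × W => H.dist p.1 p.2)]
    exact Finset.sum_congr rfl fun p _ => (hiso p.1 p.2).symm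
  omega
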